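/- arXiv:2508.12978 — 2 statements merged into one kernel-verified Lean document; each statement's English description precedes it below -/
import Mathlib

section
/- Let Agg : (ℝ^k)^n → ℝ^k be a (b,κ)-robust averaging rule, meaning for all vectors v₁,…,vₙ ∈ ℝ^k and all subsets S ⊆ [n] of size n−b, ‖Agg(v₁,…,vₙ) − v̄_S‖² ≤ (κ/|S|) Σ_{i∈S} ‖vᵢ − v̄_S‖², where v̄_S is the average of {vᵢ : i ∈ S}. Let R ∈ ℝ^{k×d} be a matrix with ‖R‖ ≤ 1+ε and ‖Rᵀ‖ ≤ 1+ε (operator norms). Then for all m₁,…,mₙ ∈ ℝ^d and any subset S of size n−b, with m̄_S the average of {mᵢ : i ∈ S}, one has ‖Rᵀ·Agg(Rm₁,…,Rmₙ) − m̄_S‖² ≤ (1+ε)⁴ · (κ/|S|) Σ_{i∈S} ‖mᵢ − m̄_S‖² + ‖RᵀR m̄_S − m̄_S‖². -/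
open Finset

/-- `Agg` is a `(b,κ)`-robust averaging rule: for all inputs and every subset `S`
of size `n - b`, the output is `κ`-close to the average over `S`. -/
def IsRobustAvg {E : Type*} [NormedAddCommGroup E] [NormedSpace ℝ E]
    (n b : ℕ) (κ : ℝ) (Agg : (Fin n → E) → E) : Prop :=
  ∀ (v : Fin n → E) (S : Finset (Fin n)), S.card = n - b →
    ‖Agg v - (S.card : ℝ)⁻¹ • ∑ i ∈ S, v i‖ ^ 2 ≤
      (κ / S.card) * ∑ i ∈ S, ‖v i - (S.card : ℝ)⁻¹ • ∑ j ∈ S, v j‖ ^ 2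

set_option maxHeartbeats 1000000 in
/-- JL compression is robust-compatible: applying a `(b,κ)`-robust averaging rule
to the compressed vectors and decompressing with `Rᵀ` stays close to the true
average, with the bound `2(1+ε)⁴·(κ/|S|)·Σ‖mᵢ−m̄_S‖² + 2‖RᵀR m̄_S − m̄_S‖²`. -/
theorem stmt_4 (n b k d : ℕ) (hn : 0 < n) (hb : 2 * b < n) (κ ε : ℝ)
    (hκ : 0 ≤ κ) (hε : 0 < ε)
    (Agg : (Fin n → EuclideanSpace ℝ (Fin k)) → EuclideanSpace ℝ (Fin k))
    (hAgg : IsRobustAvg n b κ Agg)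
    (R : EuclideanSpace ℝ (Fin d) →L[ℝ] EuclideanSpace ℝ (Fin k))
    (hR : ‖R‖ ≤ 1 + ε) (hRT : ‖ContinuousLinearMap.adjoint R‖ ≤ 1 + ε)
    (m : Fin n → EuclideanSpace ℝ (Fin d))
    (S : Finset (Fin n)) (hS : S.card = n - b) :
    ‖ContinuousLinearMap.adjoint R (Agg (fun i => R (m i))) -
        (S.card : ℝ)⁻¹ • ∑ i ∈ S, m i‖ ^ 2 ≤
      2 * (1 + ε) ^ 4 * (κ / S.card) *
          (∑ i ∈ S, ‖m i - (S.card : ℝ)⁻¹ • ∑ j ∈ S, m j‖ ^ 2) +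
        2 * ‖ContinuousLinearMap.adjoint R (R ((S.card : ℝ)⁻¹ • ∑ i ∈ S, m i)) -
              (S.card : ℝ)⁻¹ • ∑ i ∈ S, m i‖ ^ 2 := by
  have hε1 : (0:ℝ) ≤ 1 + ε := by linarith
  set A := ContinuousLinearMap.adjoint R with hA
  set mb := (S.card : ℝ)⁻¹ • ∑ i ∈ S, m i with hmb
  have havg : (S.card : ℝ)⁻¹ • ∑ i ∈ S, R (m i) = R mb := by
    rw [hmb, map_smul, map_sum]
  have h1 := hAgg (fun i => R (m i)) S hS
  simp only [havg] at h1
  have hsum : ∑ i ∈ S, ‖R (m i) - R mb‖ ^ 2 ≤ (1+ε)^2 * ∑ i ∈ S, ‖m i - mb‖ ^ 2 := by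
    rw [Finset.mul_sum]
    apply Finset.sum_le_sum
    intro i _
    have hle : ‖R (m i) - R mb‖ ≤ (1+ε) * ‖m i - mb‖ := by
      rw [← map_sub]
      calc ‖R (m i - mb)‖ ≤ ‖R‖ * ‖m i - mb‖ := R.le_opNorm _
        _ ≤ (1+ε) * ‖m i - mb‖ := by gcongr
    calc ‖R (m i) - R mb‖^2 ≤ ((1+ε) * ‖m i - mb‖)^2 := by
          apply pow_le_pow_left₀ (norm_nonneg _) hle
      _ = (1+ε)^2 * ‖m i - mb‖^2 := by ring
  have hcard : (0:ℝ) ≤ κ / S.card := by positivity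
  have hx : ‖Agg (fun i => R (m i)) - R mb‖ ^ 2 ≤
      (κ / S.card) * ((1+ε)^2 * ∑ i ∈ S, ‖m i - mb‖ ^ 2) :=
    h1.trans (mul_le_mul_of_nonneg_left hsum hcard)
  have htri : ‖A (Agg (fun i => R (m i))) - mb‖ ≤
      (1+ε) * ‖Agg (fun i => R (m i)) - R mb‖ + ‖A (R mb) - mb‖ := by
    calc ‖A (Agg (fun i => R (m i))) - mb‖
        ≤ ‖A (Agg (fun i => R (m i))) - A (R mb)‖ + ‖A (R mb) - mb‖ :=
          norm_sub_le_norm_sub_add_norm_sub _ _ _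
      _ ≤ (1+ε) * ‖Agg (fun i => R (m i)) - R mb‖ + ‖A (R mb) - mb‖ := by
          gcongr ?_ + _
          rw [← map_sub]
          calc ‖A (Agg (fun i => R (m i)) - R mb)‖
              ≤ ‖A‖ * ‖Agg (fun i => R (m i)) - R mb‖ := A.le_opNorm _
            _ ≤ (1+ε) * ‖Agg (fun i => R (m i)) - R mb‖ := by gcongr
  set X := ‖Agg (fun i => R (m i)) - R mb‖ with hX
  set Y := ‖A (R mb) - mb‖ with hY
  have hL2 : ‖A (Agg (fun i => R (m i))) - mb‖ ^ 2 ≤ ((1+ε) * X + Y)^2 := by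
    apply pow_le_pow_left₀ (norm_nonneg _) htri
  have hsq : ((1+ε) * X + Y)^2 ≤ 2 * (1+ε)^2 * X^2 + 2 * Y^2 := by nlinarith [sq_nonneg ((1+ε)*X - Y)]
  have hXnn : 0 ≤ X := norm_nonneg _
  have hfinal : 2 * (1+ε)^2 * X^2 ≤
      2 * (1 + ε) ^ 4 * (κ / S.card) * ∑ i ∈ S, ‖m i - mb‖ ^ 2 := by
    have h2 : 2 * (1+ε)^2 * X^2 ≤ 2 * (1+ε)^2 * ((κ / S.card) * ((1+ε)^2 * ∑ i ∈ S, ‖m i - mb‖ ^ 2)) := by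
      apply mul_le_mul_of_nonneg_left hx
      positivity
    calc 2 * (1+ε)^2 * X^2 ≤ _ := h2
      _ = 2 * (1 + ε) ^ 4 * (κ / S.card) * ∑ i ∈ S, ‖m i - mb‖ ^ 2 := by ring
  linarith [hL2.trans hsq]
end

section
/- Robustness coefficient after compression: under the hypotheses of the JL-robust-compatibility proposition, the composed rule satisfies ‖Rᵀ Agg(Rm₁,…,Rmₙ) − m̄_S‖² ≤ (√((1+ε)⁴ κ · (1/|S|)Σ_{i∈S}‖mᵢ−m̄_S‖²) + ‖RᵀR m̄_S − m̄_S‖)². -/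
open Finset

/-- Robustness coefficient after JL compression: the decompressed aggregate of the
compressed vectors satisfies
`‖Rᵀ Agg(Rm) − mb_S‖² ≤ (√((1+ε)⁴ κ (1/|S|)Σ‖mᵢ−mb_S‖²) + ‖RᵀR mb_S − mb_S‖)²`. -/
theorem stmt_14 (n b k d : ℕ) (hn : 0 < n) (hb : 2 * b < n) (κ ε : ℝ)
    (hκ : 0 ≤ κ) (hε : 0 < ε)
    (Agg : (Fin n → EuclideanSpace ℝ (Fin k)) → EuclideanSpace ℝ (Fin k))
    (hAgg : IsRobustAvg n b κ Agg)
    (R : EuclideanSpace ℝ (Fin d) →L[ℝ] EuclideanSpace ℝ (Fin k))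
    (hR : ‖R‖ ≤ 1 + ε) (hRT : ‖ContinuousLinearMap.adjoint R‖ ≤ 1 + ε)
    (m : Fin n → EuclideanSpace ℝ (Fin d))
    (S : Finset (Fin n)) (hS : S.card = n - b)
    (hpos : 0 < ∑ i ∈ S, ‖m i - (S.card : ℝ)⁻¹ • ∑ j ∈ S, m j‖ ^ 2) :
    ‖ContinuousLinearMap.adjoint R (Agg (fun i => R (m i))) -
        (S.card : ℝ)⁻¹ • ∑ i ∈ S, m i‖ ^ 2 ≤
      (Real.sqrt ((1 + ε) ^ 4 * κ * ((S.card : ℝ)⁻¹ *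
            ∑ i ∈ S, ‖m i - (S.card : ℝ)⁻¹ • ∑ j ∈ S, m j‖ ^ 2)) +
        ‖ContinuousLinearMap.adjoint R (R ((S.card : ℝ)⁻¹ • ∑ i ∈ S, m i)) -
            (S.card : ℝ)⁻¹ • ∑ i ∈ S, m i‖) ^ 2 := by
  have hcard : 0 < S.card := by rw [hS]; omega
  have hc : (0:ℝ) < (S.card : ℝ) := by exact_mod_cast hcard
  set mb : EuclideanSpace ℝ (Fin d) := (S.card : ℝ)⁻¹ • ∑ i ∈ S, m i with hmbdef
  set v : Fin n → EuclideanSpace ℝ (Fin k) := fun i => R (m i) with hv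
  have hvavg : (S.card : ℝ)⁻¹ • ∑ i ∈ S, v i = R mb := by
    simp only [hv, hmbdef, ← map_sum, map_smul]
  have h1 := hAgg v S hS
  rw [hvavg] at h1
  set Sig0 : ℝ := ∑ i ∈ S, ‖m i - mb‖ ^ 2 with hSig0
  have hSig0nn : 0 ≤ Sig0 := le_of_lt hpos
  have h2 : ∑ i ∈ S, ‖v i - R mb‖ ^ 2 ≤ (1 + ε) ^ 2 * Sig0 := by
    rw [hSig0, Finset.mul_sum]
    refine Finset.sum_le_sum fun i _ => ?_
    have : ‖v i - R mb‖ ≤ (1 + ε) * ‖m i - mb‖ := by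
      calc ‖v i - R mb‖ = ‖R (m i - mb)‖ := by rw [map_sub]
        _ ≤ ‖R‖ * ‖m i - mb‖ := R.le_opNorm _
        _ ≤ (1 + ε) * ‖m i - mb‖ := by gcongr
    calc ‖v i - R mb‖ ^ 2 ≤ ((1 + ε) * ‖m i - mb‖) ^ 2 := by
            apply pow_le_pow_left₀ (norm_nonneg _) this
      _ = (1 + ε) ^ 2 * ‖m i - mb‖ ^ 2 := by ring
  have hε1 : (0:ℝ) ≤ 1 + ε := by linarith
  have h3 : ‖Agg v - R mb‖ ^ 2 ≤ (1 + ε) ^ 2 * κ * ((S.card : ℝ)⁻¹ * Sig0) := by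
    calc ‖Agg v - R mb‖ ^ 2 ≤ (κ / S.card) * ∑ i ∈ S, ‖v i - R mb‖ ^ 2 := h1
      _ ≤ (κ / S.card) * ((1 + ε) ^ 2 * Sig0) := by
          apply mul_le_mul_of_nonneg_left h2 (div_nonneg hκ hc.le)
      _ = (1 + ε) ^ 2 * κ * ((S.card : ℝ)⁻¹ * Sig0) := by
          field_simp
  have key : (1 + ε) * ‖Agg v - R mb‖ ≤
      Real.sqrt ((1 + ε) ^ 4 * κ * ((S.card : ℝ)⁻¹ * Sig0)) := by
    apply Real.le_sqrt_of_sq_le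
    calc ((1 + ε) * ‖Agg v - R mb‖) ^ 2 = (1 + ε) ^ 2 * ‖Agg v - R mb‖ ^ 2 := by ring
      _ ≤ (1 + ε) ^ 2 * ((1 + ε) ^ 2 * κ * ((S.card : ℝ)⁻¹ * Sig0)) := by
          apply mul_le_mul_of_nonneg_left h3 (by positivity)
      _ = (1 + ε) ^ 4 * κ * ((S.card : ℝ)⁻¹ * Sig0) := by ring
  set Rt := ContinuousLinearMap.adjoint R with hRt
  have htri : ‖Rt (Agg v) - mb‖ ≤ (1 + ε) * ‖Agg v - R mb‖ + ‖Rt (R mb) - mb‖ := by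
    have : Rt (Agg v) - mb = Rt (Agg v - R mb) + (Rt (R mb) - mb) := by
      rw [map_sub]; abel
    rw [this]
    refine (norm_add_le _ _).trans (add_le_add_left ?_ _)
    calc ‖Rt (Agg v - R mb)‖ ≤ ‖Rt‖ * ‖Agg v - R mb‖ := Rt.le_opNorm _
      _ ≤ (1 + ε) * ‖Agg v - R mb‖ := by gcongr
  have hfinal : ‖Rt (Agg v) - mb‖ ≤
      Real.sqrt ((1 + ε) ^ 4 * κ * ((S.card : ℝ)⁻¹ * Sig0)) + ‖Rt (R mb) - mb‖ :=
    htri.trans (add_le_add_left key _)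
  exact pow_le_pow_left₀ (norm_nonneg _) hfinal 2
end
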